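/- arXiv:2104.14059 — 2 statements merged into one kernel-verified Lean document; each statement's English description precedes it below -/
import Mathlib

section
/- If λᵢ, λⱼ, λₖ are real numbers with λᵢλⱼ ≤ 0 and λᵢλₖ ≤ 0, then (|λᵢλⱼ| + |λᵢλₖ|)³ ≤ (λᵢ − λⱼ)²λᵢ²λⱼ² + (λᵢ − λₖ)²λᵢ²λₖ². -/
theorem abs_prod_cube_est (li lj lk : ℝ) (hij : li * lj ≤ 0) (hik : li * lk ≤ 0) :
    (|li * lj| + |li * lk|) ^ 3 ≤
      (li - lj) ^ 2 * li ^ 2 * lj ^ 2 + (li - lk) ^ 2 * li ^ 2 * lk ^ 2 := by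
  rw [abs_of_nonpos hij, abs_of_nonpos hik]
  have h1 : -(li * lj) ≤ (li - lj) ^ 2 / 4 := by nlinarith [sq_nonneg (li + lj)]
  have h2 : -(li * lk) ≤ (li - lk) ^ 2 / 4 := by nlinarith [sq_nonneg (li + lk)]
  have c1 : (-(li * lj)) ^ 3 ≤ (li - lj) ^ 2 * li ^ 2 * lj ^ 2 / 4 := by
    nlinarith [sq_nonneg (li * lj), sq_nonneg (li - lj)]
  have c2 : (-(li * lk)) ^ 3 ≤ (li - lk) ^ 2 * li ^ 2 * lk ^ 2 / 4 := by
    nlinarith [sq_nonneg (li * lk), sq_nonneg (li - lk)]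
  nlinarith [sq_nonneg ((-(li * lj)) - (-(li * lk))), mul_nonneg (neg_nonneg.2 hij) (neg_nonneg.2 hik), sq_nonneg (li * lj + li * lk)]
end

section
/- If λᵢ, λⱼ, λₖ are real numbers with λⱼλₖ ≥ 0, λᵢλⱼ ≤ 0 and λᵢλₖ ≤ 0, and F ≥ 0 is a real number with (λᵢ − λⱼ)²λᵢ²λⱼ² + (λᵢ − λₖ)²λᵢ²λₖ² ≤ F, then −λᵢλⱼ − λᵢλₖ − λⱼλₖ ≤ F^{1/3}. -/
theorem key_pointwise_estimate (li lj lk F : ℝ) (hjk : 0 ≤ lj * lk) (hij : li * lj ≤ 0)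
    (hik : li * lk ≤ 0) (hF : 0 ≤ F)
    (hbound : (li - lj) ^ 2 * li ^ 2 * lj ^ 2 + (li - lk) ^ 2 * li ^ 2 * lk ^ 2 ≤ F) :
    -(li * lj) - li * lk - lj * lk ≤ F ^ ((1 : ℝ) / 3) := by
  obtain ⟨a, ha'⟩ : ∃ a, a = -(li * lj) := ⟨_, rfl⟩
  obtain ⟨b, hb'⟩ : ∃ b, b = -(li * lk) := ⟨_, rfl⟩
  have ha : 0 ≤ a := by rw [ha']; linarith
  have hb : 0 ≤ b := by rw [hb']; linarith
  have h1 : 4 * a ^ 3 ≤ (li - lj) ^ 2 * li ^ 2 * lj ^ 2 := by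
    rw [ha']; nlinarith [sq_nonneg (li * lj * (li + lj))]
  have h2 : 4 * b ^ 3 ≤ (li - lk) ^ 2 * li ^ 2 * lk ^ 2 := by
    rw [hb']; nlinarith [sq_nonneg (li * lk * (li + lk))]
  have h3 : (a + b) ^ 3 ≤ 4 * a ^ 3 + 4 * b ^ 3 := by
    nlinarith [mul_nonneg (add_nonneg ha hb) (sq_nonneg (a - b)), mul_nonneg ha hb]
  have hcube : (a + b) ^ 3 ≤ F := by linarith
  have key : a + b ≤ F ^ ((1 : ℝ) / 3) := by
    have h := Real.rpow_le_rpow (by positivity) hcube (by norm_num : (0:ℝ) ≤ 1/3)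
    rwa [← Real.rpow_natCast (a + b) 3, ← Real.rpow_mul (add_nonneg ha hb),
      show ((3:ℕ):ℝ) * (1/3) = 1 by norm_num, Real.rpow_one] at h
  rw [ha', hb'] at key
  linarith
end
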